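/- The FastCAV vector equals a scalar multiple of the PatternCAV vector: w_fast = (n₁/(n₁+n₂)) · w_pat, where w_pat = μ̂₂ - μ̂₁ is the difference of the two empirical class means and w_fast = μ̂₂ - μ̂₁,₂ is the difference between the empirical mean of class 2 and the joint empirical mean of all samples. -/
import Mathlib


theorem fastCAV_scaled_patternCAV (d n₁ n₂ : ℕ) (hn₁ : 0 < n₁) (hn₂ : 0 < n₂)
    (x1 : Fin n₁ → Fin d → ℝ) (x2 : Fin n₂ → Fin d → ℝ) :
    let μ1 : Fin d → ℝ := (1 / (n₁ : ℝ)) • ∑ i, x1 i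
    let μ2 : Fin d → ℝ := (1 / (n₂ : ℝ)) • ∑ i, x2 i
    let μ12 : Fin d → ℝ := (1 / ((n₁ : ℝ) + (n₂ : ℝ))) • (∑ i, x1 i + ∑ i, x2 i)
    μ2 - μ12 = ((n₁ : ℝ) / ((n₁ : ℝ) + (n₂ : ℝ))) • (μ2 - μ1) := by
  have h1 : (n₁ : ℝ) ≠ 0 := Nat.cast_ne_zero.mpr hn₁.ne'
  have h2 : (n₂ : ℝ) ≠ 0 := Nat.cast_ne_zero.mpr hn₂.ne'
  have h12 : (n₁ : ℝ) + (n₂ : ℝ) ≠ 0 := by positivity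
  intro μ1 μ2 μ12
  funext j
  simp only [μ1, μ2, μ12, Pi.sub_apply, Pi.smul_apply, Pi.add_apply, Finset.sum_apply,
    smul_eq_mul]
  field_simp
  ring
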